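/- arXiv:1911.12471 — 4 statements merged into one kernel-verified Lean document; each statement's English description precedes it below -/
import Mathlib

section
/- A connected critical graph (a graph in which removing any edge strictly increases the independence number) has no clique cutset; that is, there is no set of pairwise adjacent vertices whose removal disconnects the graph. -/
/-!
Suppose the clique `X` separates `G`, and let `Q` be a union of components of `G - X`. Two maximum
independent sets meeting `X` in the same set (of at most one vertex) have equally many vertices in
`Q`: otherwise the part of one outside `Q` together with the part of the other inside `Q` would be
a larger independent set. Criticality of an edge `xy` yields a set `I` such that `I + x` and
`I + y` are both maximum independent sets. Apply this to an edge `xa` from `X` into `Q` and an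
edge `yb` from `X` to the other side, giving sets `I` and `J`. Comparing `I + a` with `J + b`,
which both miss `X`, shows that `J` has one more vertex in `Q` than `I`; comparing `I + x` with
`J + y` (directly if `x = y`, through the critical edge `xy` otherwise) shows that they have
equally many.
-/

open SimpleGraph Finset

/-- A set of vertices is independent if no two of its members are adjacent. -/
def IsIndepSet {V : Type*} (G : SimpleGraph V) (s : Set V) : Prop :=
  s.Pairwise fun a b => ¬ G.Adj a b

/-- The independence number of a graph: the maximum size of an independent set. -/
noncomputable def alpha {V : Type*} (G : SimpleGraph V) : ℕ :=
  sSup {n | ∃ s : Finset V, _root_.IsIndepSet G (s : Set V) ∧ s.card = n}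

/-- A graph is critical if deleting any edge strictly increases the independence number. -/
def IsCritical {V : Type*} (G : SimpleGraph V) : Prop :=
  ∀ e ∈ G.edgeSet, alpha G < alpha (G.deleteEdges {e})

section

variable {V : Type*} {G : SimpleGraph V}

theorem alpha_eq_indepNum (G : SimpleGraph V) : alpha G = G.indepNum := by
  simp only [alpha, indepNum, isNIndepSet_iff]
  rfl

theorem SimpleGraph.IsIndepSet.of_deleteEdges {s : Set V} {x y : V}
    (hs : (G.deleteEdges {s(x, y)}).IsIndepSet s) (hy : y ∉ s) : G.IsIndepSet s := by
  intro p hp q hq hpq hadj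
  refine hs hp hq hpq ((deleteEdges_adj ..).2 ⟨hadj, fun he => ?_⟩)
  rcases Sym2.eq_iff.1 (Set.mem_singleton_iff.1 he) with ⟨-, rfl⟩ | ⟨rfl, -⟩ <;> contradiction

theorem SimpleGraph.IsClique.subsingleton_inter {X I : Set V} (hX : G.IsClique X)
    (hI : G.IsIndepSet I) : (I ∩ X).Subsingleton := by
  rintro z ⟨hzI, hzX⟩ w ⟨hwI, hwX⟩
  by_contra hzw
  exact hI hzI hwI hzw (hX hzX hwX hzw)

theorem SimpleGraph.IsClique.inter_eq_inter_of_mem {X I J : Set V} (hX : G.IsClique X)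
    (hI : G.IsIndepSet I) (hJ : G.IsIndepSet J) {z : V} (hzX : z ∈ X) (hzI : z ∈ I)
    (hzJ : z ∈ J) : I ∩ X = J ∩ X := by
  rw [(hX.subsingleton_inter hI).eq_singleton_of_mem ⟨hzI, hzX⟩,
    (hX.subsingleton_inter hJ).eq_singleton_of_mem ⟨hzJ, hzX⟩]

theorem inter_eq_empty_of_isIndepSet_insert {X I : Set V}
    (hX : G.IsClique X) {x : V} (hI : G.IsIndepSet (insert x I)) (hx : x ∈ X) (hxI : x ∉ I) :
    I ∩ X = ∅ :=
  Set.eq_empty_of_forall_notMem fun _ hz =>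
    hxI ((hX.subsingleton_inter hI) ⟨.inr hz.1, hz.2⟩ ⟨.inl rfl, hx⟩ ▸ hz.1)

theorem IsCritical.exists_isNIndepSet_insert [Finite V] [DecidableEq V] (hcrit : IsCritical G)
    {x y : V} (hxy : G.Adj x y) : ∃ I : Finset V, x ∉ I ∧ y ∉ I ∧
      G.IsNIndepSet G.indepNum (insert x I) ∧ G.IsNIndepSet G.indepNum (insert y I) := by
  have hlt := hcrit s(x, y) hxy
  rw [alpha_eq_indepNum, alpha_eq_indepNum] at hlt
  obtain ⟨S, hS, hScard⟩ := (G.deleteEdges {s(x, y)}).exists_isNIndepSet_indepNum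
  have hSy : G.IsIndepSet ↑(S.erase y) :=
    IsIndepSet.of_deleteEdges (hS.mono (coe_erase y S ▸ Set.sdiff_subset)) (by simp)
  have hSx : G.IsIndepSet ↑(S.erase x) := by
    rw [Sym2.eq_swap] at hS
    exact IsIndepSet.of_deleteEdges (hS.mono (coe_erase x S ▸ Set.sdiff_subset)) (by simp)
  have hx : x ∈ S := by
    by_contra hx
    have := (erase_eq_of_notMem hx ▸ hSx).card_le_indepNum
    omega
  have hy : y ∈ S := by
    by_contra hy
    have := (erase_eq_of_notMem hy ▸ hSy).card_le_indepNum
    omega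
  have hxI : insert x ((S.erase x).erase y) = S.erase y := by
    rw [erase_right_comm, insert_erase (mem_erase.2 ⟨hxy.ne, hx⟩)]
  have hyI : insert y ((S.erase x).erase y) = S.erase x :=
    insert_erase (mem_erase.2 ⟨hxy.ne.symm, hy⟩)
  have hSx' := hSx.card_le_indepNum
  have hSy' := hSy.card_le_indepNum
  rw [card_erase_of_mem hx] at hSx'
  rw [card_erase_of_mem hy] at hSy'
  refine ⟨(S.erase x).erase y, by simp, by simp, ?_, ?_⟩ <;> rw [isNIndepSet_iff]
  · rw [hxI, card_erase_of_mem hy]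
    exact ⟨hSy, by omega⟩
  · rw [hyI, card_erase_of_mem hx]
    exact ⟨hSx, by omega⟩

theorem isIndepSet_filter_union_filter [DecidableEq V] {X Q : Set V} [DecidablePred (· ∈ Q)]
    (hQ : ∀ p q, G.Adj p q → q ∈ Q → p ∈ Q ∨ p ∈ X) {I J : Finset V}
    (hI : G.IsIndepSet I) (hJ : G.IsIndepSet J) (hIJ : ↑I ∩ X ⊆ (J : Set V)) :
    G.IsIndepSet ↑({z ∈ I | z ∉ Q} ∪ {z ∈ J | z ∈ Q}) := by
  have key : ∀ p ∈ I, p ∉ Q → ∀ q ∈ J, q ∈ Q → ¬ G.Adj p q := by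
    intro p hpI hpQ q hqJ hqQ hpq
    rcases hQ p q hpq hqQ with hp | hpX
    · exact hpQ hp
    · exact hJ (hIJ ⟨hpI, hpX⟩) hqJ (fun h => hpQ (h ▸ hqQ)) hpq
  intro p hp q hq hpq
  simp only [coe_union, coe_filter, Set.mem_union, Set.mem_ofPred_eq] at hp hq
  rcases hp with ⟨hpI, hpQ⟩ | ⟨hpJ, hpQ⟩ <;> rcases hq with ⟨hqI, hqQ⟩ | ⟨hqJ, hqQ⟩
  · exact hI hpI hqI hpq
  · exact key p hpI hpQ q hqJ hqQ
  · exact fun h => key q hqI hqQ p hpJ hpQ h.symm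
  · exact hJ hpJ hqJ hpq

theorem card_filter_le_card_filter_of_isNIndepSet [Finite V] {X Q : Set V}
    [DecidablePred (· ∈ Q)] (hQ : ∀ p q, G.Adj p q → q ∈ Q → p ∈ Q ∨ p ∈ X) {I J : Finset V}
    (hI : G.IsNIndepSet G.indepNum I) (hJ : G.IsIndepSet J) (hIJ : ↑I ∩ X ⊆ (J : Set V)) :
    #{z ∈ J | z ∈ Q} ≤ #{z ∈ I | z ∈ Q} := by
  classical
  have hle := (isIndepSet_filter_union_filter hQ hI.isIndepSet hJ hIJ).card_le_indepNum
  have hsplit : #{z ∈ I | z ∈ Q} + #{z ∈ I | z ∉ Q} = #I := card_filter_add_card_filter_not _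
  rw [card_union_of_disjoint (disjoint_filter_filter_not J I (· ∈ Q)).symm, ← hI.card_eq] at hle
  omega

theorem card_filter_eq_of_isNIndepSet [Finite V] {X Q : Set V} [DecidablePred (· ∈ Q)]
    (hQ : ∀ p q, G.Adj p q → q ∈ Q → p ∈ Q ∨ p ∈ X) {I J : Finset V}
    (hI : G.IsNIndepSet G.indepNum I) (hJ : G.IsNIndepSet G.indepNum J)
    (hIJ : ↑I ∩ X = (J : Set V) ∩ X) : #{z ∈ I | z ∈ Q} = #{z ∈ J | z ∈ Q} :=
  le_antisymm
    (card_filter_le_card_filter_of_isNIndepSet hQ hJ hI.isIndepSet (hIJ ▸ Set.inter_subset_left))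
    (card_filter_le_card_filter_of_isNIndepSet hQ hI hJ.isIndepSet (hIJ ▸ Set.inter_subset_left))

theorem not_isCritical_of_isClique_separating [Finite V] {X Q : Set V} (hX : G.IsClique X)
    (hQX : Disjoint Q X) (hQ : ∀ p q, G.Adj p q → q ∈ Q → p ∈ Q ∨ p ∈ X) {x a y b : V}
    (hx : x ∈ X) (ha : a ∈ Q) (hxa : G.Adj x a) (hy : y ∈ X) (hb : b ∉ Q ∪ X)
    (hyb : G.Adj y b) : ¬ IsCritical G := by
  intro hcrit
  classical
  have hxQ : x ∉ Q := Set.disjoint_right.1 hQX hx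
  have hyQ : y ∉ Q := Set.disjoint_right.1 hQX hy
  have haX : a ∉ X := Set.disjoint_left.1 hQX ha
  have hbQ : b ∉ Q := fun h => hb (.inl h)
  have hbX : b ∉ X := fun h => hb (.inr h)
  obtain ⟨I, hxI, haI, hIx, hIa⟩ := hcrit.exists_isNIndepSet_insert hxa
  obtain ⟨J, hyJ, hbJ, hJy, hJb⟩ := hcrit.exists_isNIndepSet_insert hyb
  have h_avoid : #{z ∈ insert a I | z ∈ Q} = #{z ∈ insert b J | z ∈ Q} := by
    refine card_filter_eq_of_isNIndepSet hQ hIa hJb ?_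
    rw [coe_insert, coe_insert, Set.insert_inter_of_notMem haX, Set.insert_inter_of_notMem hbX,
      inter_eq_empty_of_isIndepSet_insert hX (coe_insert x I ▸ hIx.isIndepSet) hx hxI,
      inter_eq_empty_of_isIndepSet_insert hX (coe_insert y J ▸ hJy.isIndepSet) hy hyJ]
  have h_meet : #{z ∈ insert x I | z ∈ Q} = #{z ∈ insert y J | z ∈ Q} := by
    by_cases hxy : x = y
    · subst hxy
      exact card_filter_eq_of_isNIndepSet hQ hIx hJy
        (hX.inter_eq_inter_of_mem hIx.isIndepSet hJy.isIndepSet hx (by simp) (by simp))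
    · obtain ⟨K, hxK, hyK, hKx, hKy⟩ := hcrit.exists_isNIndepSet_insert (hX hx hy hxy)
      calc #{z ∈ insert x I | z ∈ Q}
          _ = #{z ∈ insert x K | z ∈ Q} := card_filter_eq_of_isNIndepSet hQ hIx hKx
            (hX.inter_eq_inter_of_mem hIx.isIndepSet hKx.isIndepSet hx (by simp) (by simp))
          _ = #{z ∈ insert y K | z ∈ Q} := by simp [filter_insert, hxQ, hyQ]
          _ = #{z ∈ insert y J | z ∈ Q} := card_filter_eq_of_isNIndepSet hQ hKy hJy
            (hX.inter_eq_inter_of_mem hKy.isIndepSet hJy.isIndepSet hy (by simp) (by simp))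
  simp only [filter_insert, ha, haI, hbQ, hxQ, hyQ, ↓reduceIte, mem_filter, and_true,
    not_false_eq_true, card_insert_of_notMem] at h_avoid h_meet
  omega

theorem SimpleGraph.Connected.exists_adj_of_mem_of_notMem_union {X Q : Set V}
    (hconn : G.Connected) (hQ : ∀ p q, G.Adj p q → q ∈ Q → p ∈ Q ∨ p ∈ X) {u v : V} (hu : u ∈ Q)
    (hv : v ∉ Q ∪ X) : (∃ x ∈ X, ∃ a ∈ Q, G.Adj x a) ∧ ∃ y ∈ X, ∃ b ∉ Q ∪ X, G.Adj y b := by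
  obtain ⟨p⟩ := hconn.preconnected u v
  constructor
  · obtain ⟨d, -, hd₁, hd₂⟩ := p.exists_boundary_dart Q hu fun h => hv (.inl h)
    refine ⟨d.snd, ?_, d.fst, hd₁, d.adj.symm⟩
    exact (hQ _ _ d.adj.symm hd₁).resolve_left hd₂
  · obtain ⟨d, -, hd₁, hd₂⟩ := p.reverse.exists_boundary_dart (Q ∪ X)ᶜ hv
      fun h => h (.inl hu)
    refine ⟨d.snd, ?_, d.fst, hd₁, d.adj.symm⟩
    rcases not_not.1 hd₂ with hd₂ | hd₂
    · exact absurd (hQ _ _ d.adj hd₂) hd₁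
    · exact hd₂

end

/-- A connected critical graph has no clique cutset: removing any set of pairwise
adjacent vertices leaves a graph in which any two vertices are still joined by a path. -/
theorem stmt_1 {V : Type*} [Fintype V] (G : SimpleGraph V)
    (hconn : G.Connected) (hcrit : IsCritical G) :
    ∀ X : Set V, G.IsClique X → (G.induce Xᶜ).Preconnected := by
  intro X hX u v
  by_contra huv
  let Q : Set V := {w | ∃ hw : w ∈ Xᶜ, (G.induce Xᶜ).Reachable u ⟨w, hw⟩}
  have hQX : Disjoint Q X := Set.disjoint_left.2 fun _ ⟨hw, _⟩ => hw
  have hQ : ∀ p q, G.Adj p q → q ∈ Q → p ∈ Q ∨ p ∈ X := by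
    rintro p q hpq ⟨hq, huq⟩
    refine or_iff_not_imp_right.2 fun hp => ⟨hp, huq.trans (Adj.reachable ?_)⟩
    simpa using hpq.symm
  have hv : (v : V) ∉ Q ∪ X := by
    rintro (⟨_, huv'⟩ | hvX)
    · exact huv huv'
    · exact v.2 hvX
  obtain ⟨⟨x, hx, a, ha, hxa⟩, y, hy, b, hb, hyb⟩ :=
    hconn.exists_adj_of_mem_of_notMem_union hQ ⟨u.2, .rfl⟩ hv
  exact not_isCritical_of_isClique_separating hX hQX hQ hx ha hxa hy hb hyb hcrit
end

section
/- Every graph G has an independence packing: a collection of vertex-disjoint connected critical subgraphs G₁, …, G_k of G such that every vertex of G lies in some G_i and α(G) = α(G₁) + … + α(G_k). -/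
open SimpleGraph

/-- An independence packing of `H`: a family of pairwise vertex-disjoint connected critical
subgraphs covering all vertices, whose independence numbers sum to `alpha H`. -/
def IsIndepPacking {V : Type*} (H : SimpleGraph V) {k : ℕ} (F : Fin k → H.Subgraph) : Prop :=
  (∀ i j : Fin k, i ≠ j → Disjoint (F i).verts (F j).verts) ∧
  (∀ i : Fin k, (F i).coe.Connected ∧ IsCritical (F i).coe) ∧
  (⋃ i : Fin k, (F i).verts) = Set.univ ∧
  alpha H = ∑ i : Fin k, alpha (F i).coe

/-! Among the subgraphs `H ≤ G` with `α H = α G` take a minimal one; minimality says exactly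
that `H` is critical. The independence number is additive over any vertex partition with no edges
between the parts, in particular over the components of `H`, and this partition also works for
`H` minus an edge. So deleting an edge of a component raises the independence number of that
component, each component is critical, and the components of `H` form the packing. -/

namespace SimpleGraph

open Function

variable {V : Type*} {G H : SimpleGraph V}

theorem alpha_eq_indepNum (G : SimpleGraph V) : alpha G = G.indepNum := by
  simp only [alpha, indepNum, isNIndepSet_iff]
  rfl

theorem isCritical_iff :
    IsCritical G ↔ ∀ e ∈ G.edgeSet, G.indepNum < (G.deleteEdges {e}).indepNum := by
  simp only [IsCritical, alpha_eq_indepNum]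

theorem induce_deleteEdges_map_val (s : Set V) (e : Sym2 s) :
    (G.deleteEdges {e.map (↑)}).induce s = (G.induce s).deleteEdges {e} := by
  ext a b
  simp [← (Sym2.map.injective Subtype.val_injective).eq_iff (a := s(a, b))]

theorem induce_deleteEdges_map_val_of_disjoint {s t : Set V} (hst : Disjoint s t) (e : Sym2 s) :
    (G.deleteEdges {e.map (↑)}).induce t = G.induce t := by
  ext a b
  simp only [comap_adj, Function.Embedding.coe_subtype, deleteEdges_adj, Set.mem_singleton_iff,
    and_iff_left_iff_imp]
  intro _ hab
  obtain ⟨x, -, hx⟩ := Sym2.mem_map.mp (hab ▸ Sym2.mem_mk_left _ _ : (a : V) ∈ e.map (↑))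
  exact hst.ne_of_mem x.2 a.2 hx

theorem coe_induce_toSubgraph (hHG : H ≤ G) (s : Set V) :
    ((toSubgraph H hHG).induce s).coe = H.induce s := by
  ext ⟨a, ha⟩ ⟨b, hb⟩
  exact ⟨fun h => h.2.2, fun h => ⟨ha, hb, h⟩⟩

section Finite

variable [Finite V]

theorem indepNum_anti : Antitone (indepNum : SimpleGraph V → ℕ) := by
  intro G H hGH
  obtain ⟨s, hs⟩ := H.exists_isNIndepSet_indepNum
  have hsG : G.IsIndepSet s := hs.isIndepSet.mono' fun _ _ hnadj hadj => hnadj (hGH hadj)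
  exact hs.card_eq ▸ hsG.card_le_indepNum

theorem IsIndepSet.card_le_indepNum_induce {s : Set V} {t : Finset V} (ht : G.IsIndepSet t)
    (hts : ↑t ⊆ s) : t.card ≤ (G.induce s).indepNum := by
  classical
  have hsub : (G.induce s).IsIndepSet (t.subtype (· ∈ s) : Set s) := by
    intro a ha b hb hab
    rw [Finset.mem_coe, Finset.mem_subtype] at ha hb
    simpa using ht ha hb (Subtype.val_injective.ne hab)
  simpa [Finset.card_subtype, Finset.filter_true_of_mem hts] using hsub.card_le_indepNum

variable {ι : Type*} [Fintype ι] (P : ι → Set V)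

theorem indepNum_le_sum_indepNum_induce (hcover : ∀ v, ∃ i, v ∈ P i) :
    G.indepNum ≤ ∑ i, (G.induce (P i)).indepNum := by
  classical
  obtain ⟨s, hs⟩ := G.exists_isNIndepSet_indepNum
  choose f hf using hcover
  rw [← hs.card_eq, Finset.card_eq_sum_card_fiberwise fun x _ => Finset.mem_univ (f x)]
  refine Finset.sum_le_sum fun i _ => ?_
  have hfiber : G.IsIndepSet (s.filter (f · = i) : Set V) :=
    hs.isIndepSet.mono (Finset.coe_subset.mpr (Finset.filter_subset _ _))
  refine hfiber.card_le_indepNum_induce fun x hx => ?_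
  obtain ⟨-, rfl⟩ := Finset.mem_filter.mp hx
  exact hf x

theorem sum_indepNum_induce_le_indepNum (hdisj : Pairwise (Disjoint on P))
    (hclosed : ∀ i a b, G.Adj a b → a ∈ P i → b ∈ P i) :
    ∑ i, (G.induce (P i)).indepNum ≤ G.indepNum := by
  classical
  choose t ht using fun i => (G.induce (P i)).exists_isNIndepSet_indepNum
  set u : ι → Finset V := fun i => (t i).map (Function.Embedding.subtype _)
  have hu : ∀ i, G.IsIndepSet (u i) := fun i =>
    ((isNIndepSet_induce G).mp ((G.induce_eq_coe_induce_top (P i)) ▸ ht i)).isIndepSet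
  have huP : ∀ i, ↑(u i) ⊆ P i := fun i x hx => by
    obtain ⟨y, -, rfl⟩ := Finset.mem_map.mp hx
    exact y.2
  have hcard : (Finset.univ.biUnion u).card = ∑ i, (G.induce (P i)).indepNum := by
    rw [Finset.card_biUnion fun i _ j _ hij =>
      Finset.disjoint_coe.mp ((hdisj hij).mono (huP i) (huP j))]
    simp [u, (ht _).card_eq]
  rw [← hcard]
  refine IsIndepSet.card_le_indepNum fun a ha b hb hab hadj => ?_
  simp only [Finset.coe_biUnion, Finset.coe_univ, Set.mem_univ, Set.iUnion_true,
    Set.mem_iUnion, Finset.mem_coe] at ha hb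
  obtain ⟨i, hai⟩ := ha
  obtain ⟨j, hbj⟩ := hb
  obtain rfl : i = j := by
    by_contra hij
    exact (hdisj hij).ne_of_mem (hclosed i a b hadj (huP i hai)) (huP j hbj) rfl
  exact hu i hai hbj hab hadj

theorem indepNum_eq_sum_indepNum_induce (hcover : ∀ v, ∃ i, v ∈ P i)
    (hdisj : Pairwise (Disjoint on P)) (hclosed : ∀ i a b, G.Adj a b → a ∈ P i → b ∈ P i) :
    G.indepNum = ∑ i, (G.induce (P i)).indepNum :=
  le_antisymm (indepNum_le_sum_indepNum_induce P hcover)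
    (sum_indepNum_induce_le_indepNum P hdisj hclosed)

theorem indepNum_eq_sum_connectedComponent_of_le [Fintype G.ConnectedComponent] (hHG : H ≤ G) :
    H.indepNum = ∑ C : G.ConnectedComponent, (H.induce C.supp).indepNum :=
  indepNum_eq_sum_indepNum_induce _ (fun v => ⟨G.connectedComponentMk v, rfl⟩)
    G.pairwise_disjoint_supp_connectedComponent
    (fun C _ _ hadj ha => C.mem_supp_of_adj_mem_supp ha (hHG hadj))

theorem exists_isCritical_le_alpha_eq (G : SimpleGraph V) :
    ∃ H ≤ G, alpha H = alpha G ∧ IsCritical H := by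
  obtain ⟨H, hHG, hmin⟩ := exists_minimal_le_of_wellFoundedLT (indepNum · = G.indepNum) G rfl
  refine ⟨H, hHG, by rw [alpha_eq_indepNum, alpha_eq_indepNum, hmin.prop],
    isCritical_iff.mpr fun e he => ?_⟩
  have hlt : H.deleteEdges {e} < H :=
    (deleteEdges_le _).lt_of_ne fun h => (deleteEdges_eq_self.mp h).ne_of_mem he rfl rfl
  exact (indepNum_anti hlt.le).lt_of_ne fun h => hmin.not_prop_of_lt hlt (h.symm.trans hmin.prop)

theorem IsCritical.induce_connectedComponent_supp (hG : IsCritical G) (C : G.ConnectedComponent) :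
    IsCritical (G.induce C.supp) := by
  have := Fintype.ofFinite G.ConnectedComponent
  rw [isCritical_iff] at hG ⊢
  intro e he
  have hlt := hG (e.map (↑)) (by induction e using Sym2.ind; simpa using he)
  rw [indepNum_eq_sum_connectedComponent_of_le le_rfl,
    indepNum_eq_sum_connectedComponent_of_le (deleteEdges_le _)] at hlt
  by_contra! hle
  refine hlt.not_ge (Finset.sum_le_sum fun D _ => ?_)
  rcases eq_or_ne D C with rfl | hDC
  · rwa [induce_deleteEdges_map_val]
  · rw [induce_deleteEdges_map_val_of_disjoint
      (G.pairwise_disjoint_supp_connectedComponent hDC.symm)]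

theorem isIndepPacking_induce_connectedComponent_supp (hHG : H ≤ G) (hα : alpha H = alpha G)
    (hH : IsCritical H) [Fintype H.ConnectedComponent] {k : ℕ} (e : Fin k ≃ H.ConnectedComponent) :
    IsIndepPacking G fun i => (toSubgraph H hHG).induce (e i).supp := by
  refine ⟨fun i j hij => H.pairwise_disjoint_supp_connectedComponent (e.injective.ne hij),
    fun i => ?_, ?_, ?_⟩
  · rw [coe_induce_toSubgraph]
    exact ⟨(e i).connected_toSimpleGraph, hH.induce_connectedComponent_supp _⟩
  · exact Set.eq_univ_of_forall fun v =>
      Set.mem_iUnion.mpr ⟨e.symm (H.connectedComponentMk v), by simp⟩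
  · rw [← hα, alpha_eq_indepNum, indepNum_eq_sum_connectedComponent_of_le le_rfl, ← e.sum_comp]
    exact Finset.sum_congr rfl fun i _ =>
      ((congrArg alpha (coe_induce_toSubgraph hHG _)).trans (alpha_eq_indepNum _)).symm

end Finite

end SimpleGraph

/-- Every graph has an independence packing. -/
theorem stmt_6 {V : Type*} [Fintype V] (G : SimpleGraph V) :
    ∃ (k : ℕ) (F : Fin k → G.Subgraph), IsIndepPacking G F := by
  obtain ⟨H, hHG, hα, hH⟩ := G.exists_isCritical_le_alpha_eq
  have := Fintype.ofFinite H.ConnectedComponent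
  exact ⟨_, _,
    isIndepPacking_induce_connectedComponent_supp hHG hα hH (Fintype.equivFin _).symm⟩
end

section
/- If G is a connected critical graph, then G has a unique independence packing, namely the trivial one consisting of G itself. -/
open SimpleGraph

/-!
An independent set of `G - e` splits along the parts of a packing into sets that are independent
in the parts, unless `e` is an edge of one of the parts. So `α(G - e) ≤ ∑ α(Gᵢ) = α(G)` for every
edge `e` lying in no part, and criticality of `G` forces every edge of `G` into some part.
Disjointness of the parts then makes each part closed under adjacency in `G`, and a nonempty
subgraph of a connected graph closed under adjacency is the whole graph.
-/

section IndependencePacking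

variable {V : Type*}

lemma IsIndepSet.preimage {W : Type*} {G : SimpleGraph V} {H : SimpleGraph W} (φ : H →g G)
    {s : Set V} (hs : _root_.IsIndepSet G s) : _root_.IsIndepSet H (φ ⁻¹' s) :=
  fun _ ha _ hb _ hab => hs ha hb (φ.map_adj hab).ne (φ.map_adj hab)

lemma bddAbove_indepSet_cards [Finite V] (G : SimpleGraph V) :
    BddAbove {n | ∃ s : Finset V, _root_.IsIndepSet G (s : Set V) ∧ s.card = n} := by
  have := Fintype.ofFinite V
  exact ⟨Fintype.card V, fun _ ⟨s, _, hs⟩ => hs ▸ s.card_le_univ⟩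

lemma card_le_alpha [Finite V] {G : SimpleGraph V} {s : Finset V}
    (hs : _root_.IsIndepSet G (s : Set V)) : s.card ≤ alpha G :=
  le_csSup (bddAbove_indepSet_cards G) ⟨s, hs, rfl⟩

lemma exists_isIndepSet_card_eq_alpha [Finite V] (G : SimpleGraph V) :
    ∃ s : Finset V, _root_.IsIndepSet G (s : Set V) ∧ s.card = alpha G :=
  Nat.sSup_mem (s := {n | ∃ s : Finset V, _root_.IsIndepSet G (s : Set V) ∧ s.card = n})
    ⟨0, ∅, by simp [_root_.IsIndepSet], rfl⟩ (bddAbove_indepSet_cards G)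

lemma alpha_le_sum_of_iUnion_verts_eq_univ [Finite V] {ι : Type*} [Fintype ι]
    {G H : SimpleGraph V} (F : ι → G.Subgraph) (hcov : ⋃ i, (F i).verts = Set.univ)
    (hle : ∀ i, (F i).spanningCoe ≤ H) :
    alpha H ≤ ∑ i, alpha (F i).coe := by
  classical
  obtain ⟨s, hs, hcard⟩ := exists_isIndepSet_card_eq_alpha H
  rw [← hcard]
  have hs_eq : s = Finset.univ.biUnion fun i => s.filter (· ∈ (F i).verts) := by
    ext v
    have hv : v ∈ ⋃ i, (F i).verts := hcov ▸ Set.mem_univ v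
    simpa using fun _ => Set.mem_iUnion.1 hv
  calc s.card ≤ ∑ i, (s.filter (· ∈ (F i).verts)).card := by
        conv_lhs => rw [hs_eq]
        exact Finset.card_biUnion_le
    _ = ∑ i, (s.subtype (· ∈ (F i).verts)).card := by simp only [Finset.card_subtype]
    _ ≤ ∑ i, alpha (F i).coe := Finset.sum_le_sum fun i _ => card_le_alpha <|
        Set.Pairwise.mono (fun _ hx => Finset.mem_subtype.1 hx)
          (hs.preimage (⟨Subtype.val, fun h => hle i h⟩ : (F i).coe →g H))

lemma IsCritical.exists_mem_edgeSet [Finite V] {G : SimpleGraph V} (hG : IsCritical G)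
    {ι : Type*} [Fintype ι] (F : ι → G.Subgraph) (hcov : ⋃ i, (F i).verts = Set.univ)
    (hsum : alpha G = ∑ i, alpha (F i).coe) {e : Sym2 V} (he : e ∈ G.edgeSet) :
    ∃ i, e ∈ (F i).edgeSet := by
  by_contra! hnot
  refine (hG e he).not_ge (hsum ▸ alpha_le_sum_of_iUnion_verts_eq_univ F hcov fun i a b hab => ?_)
  exact deleteEdges_adj.2 ⟨(F i).adj_sub hab, fun h => hnot i (Set.mem_singleton_iff.1 h ▸ hab)⟩

namespace SimpleGraph.Subgraph

lemma adj_of_forall_mem_edgeSet {G : SimpleGraph V} {ι : Type*} {F : ι → G.Subgraph}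
    (hdisj : ∀ i j, i ≠ j → Disjoint (F i).verts (F j).verts)
    (hedge : ∀ e ∈ G.edgeSet, ∃ i, e ∈ (F i).edgeSet) (i : ι) :
    ∀ v ∈ (F i).verts, ∀ w, G.Adj v w → (F i).Adj v w := by
  intro v hv w hvw
  obtain ⟨j, hj⟩ := hedge s(v, w) hvw
  obtain rfl : j = i := by
    by_contra hji
    exact Set.disjoint_left.1 (hdisj j i hji) ((F j).edge_vert hj) hv
  exact hj

lemma eq_top_of_forall_adj {G : SimpleGraph V} (hG : G.Connected) {H : G.Subgraph}
    (hne : H.verts.Nonempty) (h : ∀ v ∈ H.verts, ∀ w, G.Adj v w → H.Adj v w) : H = ⊤ := by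
  obtain ⟨u, hu⟩ := hne
  have hverts : ∀ v, v ∈ H.verts := fun v => (hG u v).mem_subgraphVerts h hu
  ext a b
  · simpa using hverts a
  · exact ⟨H.adj_sub, h a (hverts a) b⟩

end SimpleGraph.Subgraph

end IndependencePacking

/-- A connected critical graph has a unique independence packing, namely the trivial one
consisting of `G` itself. -/
theorem stmt_7 {V : Type*} [Fintype V] (G : SimpleGraph V)
    (hconn : G.Connected) (hcrit : IsCritical G)
    {k : ℕ} (F : Fin k → G.Subgraph) (hF : IsIndepPacking G F) :
    k = 1 ∧ ∀ i : Fin k, F i = ⊤ := by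
  obtain ⟨hdisj, hparts, hcov, hsum⟩ := hF
  have hedge : ∀ e ∈ G.edgeSet, ∃ i, e ∈ (F i).edgeSet :=
    fun _ he => hcrit.exists_mem_edgeSet F hcov hsum he
  have htop : ∀ i, F i = ⊤ := fun i =>
    Subgraph.eq_top_of_forall_adj hconn (Set.nonempty_coe_sort.1 (hparts i).1.nonempty)
      (Subgraph.adj_of_forall_mem_edgeSet hdisj hedge i)
  obtain ⟨v⟩ := hconn.nonempty
  obtain ⟨i, -⟩ := Set.mem_iUnion.1 (hcov ▸ Set.mem_univ v : v ∈ ⋃ i, (F i).verts)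
  have hunique : ∀ j, j = i := fun j => by
    by_contra hji
    exact Set.disjoint_left.1 (hdisj j i hji) (by simp [htop]) (by simp [htop] : v ∈ _)
  refine ⟨?_, htop⟩
  simpa using Fintype.card_eq_one_iff.2 ⟨i, hunique⟩
end

section
/- Let C = v₁v₂…v₂ₜ be a shortest even cycle in a graph G of girth at least 7 with maximum degree 3. Then C has at most one chord, and every chord of C joins two vertices at even distance along C. -/
/-!
Write the cycle as `C = P + uv` with `P` a path from `v` to `u`, and number the vertices along
`P`. A chord joining positions `i < j` closes the arc `P[i..j]` into a cycle of length
`j - i + 1`; the girth bound gives `j - i ≥ 6`, and `j - i` is even, since otherwise this is an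
even cycle no longer than `C`, which happens only for the edge `uv` itself.

For two chords, rotate `C` to start at an endpoint `v` of the first one, `vb`, and let `cd` be the
second, with `c` before `d`. If `c ≠ v`, then according to whether `cd` lies beyond `b`, between
`v` and `b`, or crosses `vb`, arcs of `C` and the two chords form an even cycle shorter than `C`,
or two even cycles of total length `|C| + 4`, one of which is shorter than `C` because
`|C| ≥ 7` (a shared endpoint `b` is the case of an empty arc). So every chord passes through
both endpoints of the first one.
-/

open SimpleGraph

theorem List.IsSuffix.length_sub_le_idxOf {α : Type*} [BEq α] [LawfulBEq α] {l₁ l₂ : List α}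
    {a : α} (hl : l₁ <:+ l₂) (hnd : l₂.Nodup) (ha : a ∈ l₁) :
    l₂.length - l₁.length ≤ l₂.idxOf a := by
  obtain ⟨l₃, rfl⟩ := hl
  rw [List.idxOf_append_of_notMem fun h => List.disjoint_of_nodup_append hnd h ha]
  simp

namespace SimpleGraph.Walk

variable {V : Type*} {G : SimpleGraph V} {u v w x y : V}

def IsShortestEvenCycle (C : G.Walk v v) : Prop :=
  C.IsCycle ∧ Even C.length ∧
    ∀ (w : V) (D : G.Walk w w), D.IsCycle → Even D.length → C.length ≤ D.length

theorem IsCycle.exists_eq_concat {C : G.Walk v v} (hC : C.IsCycle) :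
    ∃ (u : V) (P : G.Walk v u) (h : G.Adj u v), P.IsPath ∧ C = P.concat h :=
  ⟨_, _, _, hC.isPath_dropLast, (concat_dropLast (adj_penultimate hC.not_nil)).symm⟩

theorem IsPath.cons_isCycle {p : G.Walk u v} (hp : p.IsPath) (h : G.Adj v u)
    (hlen : 1 < p.length) : (cons h p).IsCycle :=
  (cons_isCycle_iff p h).2 ⟨hp, fun he => by
    have := hp.length_eq_one_of_mem_edges (Sym2.eq_swap ▸ he); omega⟩

theorem IsPath.append_cons {q₁ : G.Walk u v} {q₂ : G.Walk w x} (h₁ : q₁.IsPath)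
    (h₂ : q₂.IsPath) (hdisj : q₁.support.Disjoint q₂.support) (h : G.Adj v w) :
    (q₁.append (cons h q₂)).IsPath := by
  rw [isPath_def, support_append, support_cons, List.tail_cons]
  exact List.nodup_append'.2 ⟨h₁.support_nodup, h₂.support_nodup, hdisj⟩

theorem isChord_concat_iff {P : G.Walk v u} {h : G.Adj u v} :
    (P.concat h).IsChord s(x, y) ↔
      G.Adj x y ∧ s(x, y) ∉ P.edges ∧ s(x, y) ≠ s(u, v) ∧ x ∈ P.support ∧ y ∈ P.support := by
  have hv : v ∈ P.support := P.start_mem_support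
  simp only [isChord_sym2Mk, support_concat, edges_concat, List.concat_eq_append,
    List.mem_append, List.mem_singleton, not_or]
  constructor
  · rintro ⟨hxy, ⟨hP, hne⟩, hx | rfl, hy | rfl⟩ <;>
      exact ⟨hxy, hP, hne, by assumption, by assumption⟩
  · rintro ⟨hxy, hP, hne, hx, hy⟩
    exact ⟨hxy, ⟨hP, hne⟩, .inl hx, .inl hy⟩

variable [DecidableEq V]

theorem IsShortestEvenCycle.rotate {C : G.Walk v v} (hC : C.IsShortestEvenCycle)
    (hu : u ∈ C.support) : (C.rotate u hu).IsShortestEvenCycle :=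
  ⟨hC.1.rotate hu, (length_rotate C u hu).symm ▸ hC.2.1,
    fun w D hD hE => (length_rotate C u hu).symm ▸ hC.2.2 w D hD hE⟩

theorem IsChord.rotate {C : G.Walk v v} {e : Sym2 V} (h : C.IsChord e) (hu : u ∈ C.support) :
    (C.rotate u hu).IsChord e := by
  induction e using Sym2.ind with
  | _ x y =>
    obtain ⟨hxy, he, hx, hy⟩ := isChord_sym2Mk.1 h
    exact isChord_sym2Mk.2 ⟨hxy, fun h' => he ((rotate_edges C u hu).perm.mem_iff.1 h'),
      (mem_support_rotate_iff C u hu).2 hx, (mem_support_rotate_iff C u hu).2 hy⟩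

theorem idxOf_support_concat {P : G.Walk v u} (h : G.Adj u v) (hw : w ∈ P.support) :
    (P.concat h).support.idxOf w = P.support.idxOf w := by
  rw [support_concat, List.idxOf_append_of_mem hw]

theorem idxOf_support_start (p : G.Walk u v) : p.support.idxOf u = 0 := by
  rw [← cons_tail_support, List.idxOf_cons_self]

theorem idxOf_support_pos {p : G.Walk u v} (hw : w ∈ p.support) (hne : w ≠ u) :
    0 < p.support.idxOf w :=
  Nat.pos_of_ne_zero fun h => hne (by rw [← p.getVert_support_idxOf hw, h, getVert_zero])

theorem idxOf_support_le_length {p : G.Walk u v} (hw : w ∈ p.support) :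
    p.support.idxOf w ≤ p.length :=
  p.length_takeUntil hw ▸ p.length_takeUntil_le_length hw

theorem IsPath.idxOf_support_end {p : G.Walk u v} (hp : p.IsPath) :
    p.support.idxOf v = p.length :=
  hp.getVert_injOn (idxOf_support_le_length p.end_mem_support) (le_refl p.length)
    (by rw [getVert_support_idxOf _ p.end_mem_support, getVert_length])

theorem IsPath.exists_subpath {p : G.Walk u v} (hp : p.IsPath) (hx : x ∈ p.support)
    (hy : y ∈ p.support) (hxy : p.support.idxOf x ≤ p.support.idxOf y) :
    ∃ q : G.Walk x y, q.IsPath ∧ q.length = p.support.idxOf y - p.support.idxOf x ∧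
      q.edges ⊆ p.edges ∧ ∀ w ∈ q.support,
        p.support.idxOf x ≤ p.support.idxOf w ∧ p.support.idxOf w ≤ p.support.idxOf y := by
  set t := p.takeUntil y hy
  have ht : t.support <+: p.support := p.support_takeUntil_prefix_support hy
  have htlen : t.support.length = p.support.idxOf y + 1 := by
    rw [length_support, length_takeUntil]
  have hmem : ∀ w ∈ p.support, w ∈ t.support ↔ p.support.idxOf w ≤ p.support.idxOf y :=
    fun w _ => by rw [ht.mem_iff_idxOf_lt_length, htlen, Nat.lt_succ_iff]
  have hxt : x ∈ t.support := (hmem x hx).2 hxy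
  have hidx : ∀ w ∈ t.support, t.support.idxOf w = p.support.idxOf w :=
    fun w hw => ht.idxOf_eq_of_mem hw
  refine ⟨t.dropUntil x hxt, (hp.takeUntil hy).dropUntil hxt, ?_,
    fun e he => p.edges_takeUntil_subset_edges hy (t.edges_dropUntil_subset_edges hxt he),
    fun w hw => ?_⟩
  · rw [length_dropUntil, hidx x hxt, length_takeUntil]
  · have hwt := t.support_dropUntil_subset_support hxt hw
    have hlow := (t.support_dropUntil_suffix_support hxt).length_sub_le_idxOf
      (hp.takeUntil hy).support_nodup hw
    rw [length_support, length_support, length_dropUntil, hidx w hwt, hidx x hxt] at hlow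
    have hup := (hmem w (ht.subset hwt)).1 hwt
    have : t.length = p.support.idxOf y := length_takeUntil p hy
    omega

section ClosedPath

variable {P : G.Walk v u} {huv : G.Adj u v}

theorem exists_isCycle_of_isChord_concat (hP : P.IsPath) (h : (P.concat huv).IsChord s(x, y))
    (hlt : P.support.idxOf x < P.support.idxOf y) :
    ∃ D : G.Walk y y, D.IsCycle ∧ D.length = P.support.idxOf y - P.support.idxOf x + 1 := by
  obtain ⟨hxy, hxyP, -, hx, hy⟩ := isChord_concat_iff.1 h
  obtain ⟨q, hq, hqlen, hqP, -⟩ := hP.exists_subpath hx hy hlt.le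
  exact ⟨cons hxy.symm q, (cons_isCycle_iff q hxy.symm).2
    ⟨hq, fun he => hxyP (hqP (Sym2.eq_swap ▸ he))⟩, by rw [length_cons, hqlen]⟩

theorem six_le_idxOf_sub_of_isChord_concat (hP : P.IsPath) (hg : 7 ≤ G.girth)
    (h : (P.concat huv).IsChord s(x, y)) (hlt : P.support.idxOf x < P.support.idxOf y) :
    6 ≤ P.support.idxOf y - P.support.idxOf x := by
  obtain ⟨D, hD, hDlen⟩ := exists_isCycle_of_isChord_concat hP h hlt
  have := hg.trans (girth_le_length hD)
  omega

theorem even_idxOf_sub_of_isChord_concat (hP : P.IsPath) (hC : (P.concat huv).IsShortestEvenCycle)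
    (h : (P.concat huv).IsChord s(x, y)) (hlt : P.support.idxOf x < P.support.idxOf y) :
    Even (P.support.idxOf y - P.support.idxOf x) := by
  obtain ⟨D, hD, hDlen⟩ := exists_isCycle_of_isChord_concat hP h hlt
  obtain ⟨-, -, hne, hx, hy⟩ := isChord_concat_iff.1 h
  by_contra hodd
  have hmin := hC.2.2 y D hD (by rw [hDlen, Nat.even_add_one]; exact hodd)
  rw [length_concat, hDlen] at hmin
  have hyL := idxOf_support_le_length hy
  -- an odd chord is only as long as `C` when it joins the two ends of `P`
  have hx0 : x = v := by
    rw [← P.getVert_support_idxOf hx, show P.support.idxOf x = 0 by omega, getVert_zero]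
  have hyu : y = u := by
    rw [← P.getVert_support_idxOf hy, show P.support.idxOf y = P.length by omega, getVert_length]
  exact hne (hx0 ▸ hyu ▸ Sym2.eq_swap)

theorem exists_isCycle_initial_arc {b c d : V} (hP : P.IsPath) (hc : c ∈ P.support)
    (hc0 : 0 < P.support.idxOf c) (hcd : G.Adj c d) {Q : G.Walk d b} (hQ : Q.IsPath)
    (hQc : ∀ w ∈ Q.support, P.support.idxOf c < P.support.idxOf w) (hbv : G.Adj b v) :
    ∃ D : G.Walk b b, D.IsCycle ∧ D.length = P.support.idxOf c + Q.length + 2 := by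
  have h0 := idxOf_support_start P
  obtain ⟨q, hq, hqlen, -, hqc⟩ := hP.exists_subpath P.start_mem_support hc (by omega)
  have hdisj : q.support.Disjoint Q.support := by
    intro w hw hw'
    have := hqc w hw
    have := hQc w hw'
    omega
  refine ⟨cons hbv (q.append (cons hcd Q)), (hq.append_cons hQ hdisj hcd).cons_isCycle hbv ?_, ?_⟩
  all_goals simp only [length_cons, length_append]; omega

theorem exists_isCycle_final_arc {b c d : V} (hP : P.IsPath) (h : G.Adj u v) (hvb : G.Adj v b)
    {Q : G.Walk b c} (hQ : Q.IsPath) (hcd : G.Adj c d) (hd : d ∈ P.support)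
    (hQd : ∀ w ∈ Q.support, 0 < P.support.idxOf w ∧ P.support.idxOf w < P.support.idxOf d) :
    ∃ D : G.Walk u u, D.IsCycle ∧ D.length = Q.length + (P.length - P.support.idxOf d) + 3 := by
  have h0 := idxOf_support_start P
  have hdu := idxOf_support_le_length hd
  have hend := hP.idxOf_support_end
  obtain ⟨q, hq, hqlen, -, hqd⟩ := hP.exists_subpath hd P.end_mem_support (by omega)
  have hdisj : Q.support.Disjoint q.support := by
    intro w hw hw'
    have := hQd w hw
    have := hqd w hw'
    omega
  have hv : v ∉ (Q.append (cons hcd q)).support := by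
    rw [support_append, support_cons, List.tail_cons, List.mem_append]
    have := hQd b Q.start_mem_support
    rintro (hw | hw)
    · have := hQd v hw
      omega
    · have := hqd v hw
      omega
  refine ⟨cons h (cons hvb (Q.append (cons hcd q))),
    ((hQ.append_cons hq hdisj hcd).cons hv).cons_isCycle h ?_, ?_⟩
  all_goals simp only [length_cons, length_append]; omega

theorem eq_start_of_isChord_concat_of_idxOf_lt {b c d : V} (hP : P.IsPath)
    (hC : (P.concat huv).IsShortestEvenCycle) (hg : 7 ≤ G.girth)
    (hb : (P.concat huv).IsChord s(v, b)) (hcd : (P.concat huv).IsChord s(c, d))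
    (hlt : P.support.idxOf c < P.support.idxOf d) : c = v := by
  by_contra hcv
  obtain ⟨hvb, -, -, -, hbP⟩ := isChord_concat_iff.1 hb
  obtain ⟨hcd', -, -, hc, hd⟩ := isChord_concat_iff.1 hcd
  have h0 := idxOf_support_start P
  have hc0 := idxOf_support_pos hc hcv
  have hb0 := idxOf_support_pos hbP hvb.ne'
  have hb6 := six_le_idxOf_sub_of_isChord_concat hP hg hb (h0 ▸ hb0)
  have hbev := Nat.even_iff.1 (even_idxOf_sub_of_isChord_concat hP hC hb (h0 ▸ hb0))
  have hcd6 := six_le_idxOf_sub_of_isChord_concat hP hg hcd hlt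
  have hcdev := Nat.even_iff.1 (even_idxOf_sub_of_isChord_concat hP hC hcd hlt)
  have hL := Nat.even_iff.1 hC.2.1
  have hbL := idxOf_support_le_length hbP
  have hdL := idxOf_support_le_length hd
  have hn := length_concat P huv
  rcases le_or_gt (P.support.idxOf b) (P.support.idxOf c) with hbc | hcb
  · obtain ⟨Q, hQ, hQlen, -, hQidx⟩ := hP.exists_subpath hbP hc hbc
    obtain ⟨D, hD, hDlen⟩ := exists_isCycle_final_arc hP huv hvb hQ hcd' hd
      fun w hw => ⟨hb0.trans_le (hQidx w hw).1, (hQidx w hw).2.trans_lt hlt⟩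
    have := hC.2.2 _ D hD (Nat.even_iff.2 (by omega))
    omega
  rcases le_or_gt (P.support.idxOf d) (P.support.idxOf b) with hdb | hbd
  · obtain ⟨Q, hQ, hQlen, -, hQidx⟩ := hP.exists_subpath hd hbP hdb
    obtain ⟨D, hD, hDlen⟩ := exists_isCycle_initial_arc hP hc hc0 hcd' hQ
      (fun w hw => hlt.trans_le (hQidx w hw).1) hvb.symm
    have := hC.2.2 _ D hD (Nat.even_iff.2 (by omega))
    omega
  · -- the two chords cross: the two cycles through both of them have total length `|C| + 4`
    obtain ⟨Q₁, hQ₁, hQ₁len, -, hQ₁idx⟩ := hP.exists_subpath hbP hd hbd.le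
    obtain ⟨D₁, hD₁, hD₁len⟩ := exists_isCycle_initial_arc hP hc hc0 hcd' hQ₁.reverse
      (fun w hw => hcb.trans_le (hQ₁idx w (by simpa using hw)).1) hvb.symm
    obtain ⟨Q₂, hQ₂, hQ₂len, -, hQ₂idx⟩ := hP.exists_subpath hc hbP hcb.le
    obtain ⟨D₂, hD₂, hD₂len⟩ := exists_isCycle_final_arc hP huv hvb hQ₂.reverse hcd' hd
      fun w hw => have hw' := hQ₂idx w (by simpa using hw)
        ⟨hc0.trans_le hw'.1, hw'.2.trans_lt hbd⟩
    rw [length_reverse] at hD₁len hD₂len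
    have := hC.2.2 _ D₁ hD₁ (Nat.even_iff.2 (by omega))
    have := hC.2.2 _ D₂ hD₂ (Nat.even_iff.2 (by omega))
    omega

end ClosedPath

theorem IsShortestEvenCycle.mem_of_isChord {C : G.Walk v v} {a b c d : V}
    (hC : C.IsShortestEvenCycle) (hg : 7 ≤ G.girth) (h₁ : C.IsChord s(a, b))
    (h₂ : C.IsChord s(c, d)) : a ∈ s(c, d) := by
  have ha := (isChord_sym2Mk.1 h₁).2.2.1
  have hC' := hC.rotate ha
  have h₁' := h₁.rotate ha
  have h₂' := h₂.rotate ha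
  obtain ⟨u, P, huv, hP, hPC⟩ := hC'.1.exists_eq_concat
  rw [hPC] at hC' h₁' h₂'
  obtain ⟨hcd, -, -, hc, -⟩ := isChord_concat_iff.1 h₂'
  rcases lt_trichotomy (P.support.idxOf c) (P.support.idxOf d) with hlt | heq | hgt
  · exact eq_start_of_isChord_concat_of_idxOf_lt hP hC' hg h₁' h₂' hlt ▸ Sym2.mem_mk_left c d
  · exact absurd ((List.idxOf_inj hc).1 heq) hcd.ne
  · rw [Sym2.eq_swap] at h₂' ⊢
    exact eq_start_of_isChord_concat_of_idxOf_lt hP hC' hg h₁' h₂' hgt ▸ Sym2.mem_mk_left d c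

theorem IsShortestEvenCycle.subsingleton_isChord {C : G.Walk v v} (hC : C.IsShortestEvenCycle)
    (hg : 7 ≤ G.girth) : {e | C.IsChord e}.Subsingleton := by
  intro e₁ h₁ e₂ h₂
  induction e₁ using Sym2.ind with | _ a b =>
  induction e₂ using Sym2.ind with | _ c d =>
  have h₁' : C.IsChord s(b, a) := by rwa [Sym2.eq_swap]
  exact ((Sym2.mem_and_mem_iff (isChord_sym2Mk.1 h₁).1.ne).1
    ⟨hC.mem_of_isChord hg h₁ h₂, hC.mem_of_isChord hg h₁' h₂⟩).symm

theorem IsShortestEvenCycle.even_idxOf_add_idxOf {C : G.Walk v v} (hC : C.IsShortestEvenCycle)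
    (h : C.IsChord s(x, y)) : Even (C.support.idxOf x + C.support.idxOf y) := by
  obtain ⟨u, P, huv, hP, rfl⟩ := hC.1.exists_eq_concat
  obtain ⟨hxy, -, -, hx, hy⟩ := isChord_concat_iff.1 h
  rw [idxOf_support_concat huv hx, idxOf_support_concat huv hy, Nat.even_iff]
  rcases lt_trichotomy (P.support.idxOf x) (P.support.idxOf y) with hlt | heq | hgt
  · have := Nat.even_iff.1 (even_idxOf_sub_of_isChord_concat hP hC h hlt)
    omega
  · exact absurd ((List.idxOf_inj hx).1 heq) hxy.ne
  · rw [Sym2.eq_swap] at h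
    have := Nat.even_iff.1 (even_idxOf_sub_of_isChord_concat hP hC h hgt)
    omega

end SimpleGraph.Walk

theorem stmt_11_general {V : Type*} [DecidableEq V] (G : SimpleGraph V)
    (hgirth : 7 ≤ G.girth)
    (v : V) (C : G.Walk v v) (hC : C.IsCycle) (heven : Even C.length)
    (hmin : ∀ (w : V) (D : G.Walk w w), D.IsCycle → Even D.length → C.length ≤ D.length) :
    Set.Subsingleton {e : Sym2 V | e ∈ G.edgeSet ∧ e ∉ C.edges ∧ ∀ x ∈ e, x ∈ C.support} ∧
    ∀ x y : V, G.Adj x y → x ∈ C.support → y ∈ C.support → s(x, y) ∉ C.edges →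
      Even (C.support.idxOf x + C.support.idxOf y) := by
  have hC' : C.IsShortestEvenCycle := ⟨hC, heven, hmin⟩
  refine ⟨(hC'.subsingleton_isChord hgirth).anti ?_,
    fun x y hxy hx hy he => hC'.even_idxOf_add_idxOf (Walk.isChord_sym2Mk.2 ⟨hxy, he, hx, hy⟩)⟩
  rintro e ⟨he, heC, hsupp⟩
  induction e using Sym2.ind with | _ x y =>
  exact Walk.isChord_sym2Mk.2
    ⟨he, heC, hsupp x (Sym2.mem_mk_left x y), hsupp y (Sym2.mem_mk_right x y)⟩

/-- Let `C` be a shortest even cycle in a graph of girth at least `7` with maximum degree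
at most `3`. Then `C` has at most one chord, and every chord of `C` joins two vertices at
even distance along `C` (equivalently, two vertices whose positions along `C` have the
same parity). -/
theorem stmt_11 {V : Type*} [Fintype V] [DecidableEq V] (G : SimpleGraph V)
    [DecidableRel G.Adj]
    (hgirth : 7 ≤ G.girth) (hdeg : ∀ v, G.degree v ≤ 3)
    (v : V) (C : G.Walk v v) (hC : C.IsCycle) (heven : Even C.length)
    (hmin : ∀ (w : V) (D : G.Walk w w), D.IsCycle → Even D.length → C.length ≤ D.length) :
    Set.Subsingleton {e : Sym2 V | e ∈ G.edgeSet ∧ e ∉ C.edges ∧ ∀ x ∈ e, x ∈ C.support} ∧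
    ∀ x y : V, G.Adj x y → x ∈ C.support → y ∈ C.support → s(x, y) ∉ C.edges →
      Even (C.support.idxOf x + C.support.idxOf y) :=
  stmt_11_general G hgirth v C hC heven hmin
end
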